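/- arXiv:0906.0676 — 2 statements merged into one kernel-verified Lean document; each statement's English description precedes it below -/
import Mathlib

section
/- Let w₁ : [a₁,b₁] → ℝⁿ and w₂ : [a₂,b₂] → ℝⁿ be two continuous injective parametrizations of the same curve F (i.e., w₁([a₁,b₁]) = w₂([a₂,b₂])) with the same orientation: w₁(a₁) = w₂(a₂) and w₁(b₁) = w₂(b₂). Then the mass function is independent of the parametrization: γ^α(F, a₁, b₁; w₁) = γ^α(F, a₂, b₂; w₂). -/
open Set
open scoped ENNReal

structure Subdivision (a b : ℝ) where
  k : ℕ
  t : ℕ → ℝ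
  first : t 0 = a
  last : t k = b
  mono : ∀ i < k, t i < t (i + 1)

def Subdivision.MeshLE {a b : ℝ} (P : Subdivision a b) (δ : ℝ) : Prop :=
  ∀ i < P.k, P.t (i + 1) - P.t i ≤ δ

noncomputable def sigmaSum {n : ℕ} (α : ℝ) (w : ℝ → EuclideanSpace ℝ (Fin n))
    {a b : ℝ} (P : Subdivision a b) : ℝ :=
  (∑ i ∈ Finset.range P.k, ‖w (P.t (i + 1)) - w (P.t i)‖ ^ α) / Real.Gamma (α + 1)

noncomputable def gammaDelta {n : ℕ} (α : ℝ) (w : ℝ → EuclideanSpace ℝ (Fin n))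
    (a b δ : ℝ) : ℝ≥0∞ :=
  ⨅ (P : Subdivision a b) (_ : P.MeshLE δ), ENNReal.ofReal (sigmaSum α w P)

noncomputable def massFn {n : ℕ} (α : ℝ) (w : ℝ → EuclideanSpace ℝ (Fin n))
    (a b : ℝ) : ℝ≥0∞ :=
  ⨆ (δ : ℝ) (_ : 0 < δ), gammaDelta α w a b δ

/-!
`φ := w₁⁻¹ ∘ w₂` is continuous (the inverse of a continuous injection on a compact set is
continuous), injective and fixes the endpoints, hence a strictly increasing map of `[a₂, b₂]`
onto `[a₁, b₁]` with `w₁ ∘ φ = w₂`. Pushing a subdivision forward along `φ` keeps its `σ`-sum,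
and by uniform continuity of `φ` it turns fine subdivisions into fine ones, so each mass
bounds the other.
-/

open Function

theorem Set.InjOn.continuousOn_invFunOn {X Y : Type*} [TopologicalSpace X] [Nonempty X]
    [TopologicalSpace Y] [T2Space Y] {f : X → Y} {K : Set X} (hinj : InjOn f K)
    (hK : IsCompact K) (hf : ContinuousOn f K) : ContinuousOn (invFunOn f K) (f '' K) := by
  rw [continuousOn_iff_isClosed]
  intro C hC
  refine ⟨f '' (K ∩ C), ((hK.inter_right hC).image_of_continuousOn
    (hf.mono inter_subset_left)).isClosed, ?_⟩
  ext y
  constructor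
  · rintro ⟨hyC, x, hx, rfl⟩
    refine ⟨⟨x, ⟨hx, ?_⟩, rfl⟩, x, hx, rfl⟩
    rwa [← hinj.leftInvOn_invFunOn hx]
  · rintro ⟨⟨x, ⟨hx, hxC⟩, rfl⟩, hy⟩
    exact ⟨by rwa [mem_preimage, hinj.leftInvOn_invFunOn hx], hy⟩

namespace Subdivision

variable {a b : ℝ} (P : Subdivision a b)

theorem strictMonoOn : StrictMonoOn P.t (Iic P.k) :=
  strictMonoOn_Iic_of_lt_succ fun m hm => by simpa using P.mono m hm

theorem t_mem_Icc {i : ℕ} (hi : i ≤ P.k) : P.t i ∈ Icc a b :=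
  ⟨P.first.symm.trans_le (P.strictMonoOn.monotoneOn (Nat.zero_le P.k) hi (Nat.zero_le i)),
    (P.strictMonoOn.monotoneOn hi (le_refl P.k) hi).trans_eq P.last⟩

def map {a' b' : ℝ} (φ : ℝ → ℝ) (hφ : StrictMonoOn φ (Icc a b)) (ha : φ a = a')
    (hb : φ b = b') : Subdivision a' b' where
  k := P.k
  t := φ ∘ P.t
  first := by simp [P.first, ha]
  last := by simp [P.last, hb]
  mono i hi := hφ (P.t_mem_Icc hi.le) (P.t_mem_Icc hi) (P.mono i hi)

variable {a' b' : ℝ} {φ : ℝ → ℝ} (hφ : StrictMonoOn φ (Icc a b)) (ha : φ a = a')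
  (hb : φ b = b')

theorem meshLE_map {δ ε : ℝ}
    (hφε : ∀ x ∈ Icc a b, ∀ y ∈ Icc a b, dist x y ≤ δ → dist (φ x) (φ y) ≤ ε)
    (hP : P.MeshLE δ) : (P.map φ hφ ha hb).MeshLE ε := fun i hi => by
  have hδ : dist (P.t (i + 1)) (P.t i) ≤ δ := by
    rw [Real.dist_eq, abs_of_pos (sub_pos.mpr (P.mono i hi))]
    exact hP i hi
  exact (Real.sub_le_dist _ _).trans (hφε _ (P.t_mem_Icc hi) _ (P.t_mem_Icc hi.le) hδ)

theorem sigmaSum_map {n : ℕ} (α : ℝ) {w w' : ℝ → EuclideanSpace ℝ (Fin n)}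
    (hw : EqOn (w' ∘ φ) w (Icc a b)) : sigmaSum α w' (P.map φ hφ ha hb) = sigmaSum α w P := by
  refine congrArg (· / _) (Finset.sum_congr rfl fun i hi => ?_)
  have hi : i < P.k := Finset.mem_range.mp hi
  rw [← hw (P.t_mem_Icc hi), ← hw (P.t_mem_Icc hi.le)]
  rfl

end Subdivision

theorem massFn_le_of_strictMonoOn {n : ℕ} (α : ℝ) {a b a' b' : ℝ}
    {w w' : ℝ → EuclideanSpace ℝ (Fin n)} {φ : ℝ → ℝ}
    (hφ : StrictMonoOn φ (Icc a b)) (hφc : ContinuousOn φ (Icc a b))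
    (ha : φ a = a') (hb : φ b = b') (hw : EqOn (w' ∘ φ) w (Icc a b)) :
    massFn α w' a' b' ≤ massFn α w a b := by
  refine iSup₂_le fun ε hε => ?_
  obtain ⟨δ, hδ, hφε⟩ := Metric.uniformContinuousOn_iff_le.mp
    (isCompact_Icc.uniformContinuousOn_of_continuous hφc) ε hε
  refine le_iSup₂_of_le δ hδ (le_iInf₂ fun P hP => ?_)
  refine iInf₂_le_of_le (P.map φ hφ ha hb) (P.meshLE_map hφ ha hb hφε hP) ?_
  rw [P.sigmaSum_map hφ ha hb α hw]

theorem massFn_le_of_image_eq {n : ℕ} (α : ℝ) {a₁ b₁ a₂ b₂ : ℝ}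
    (hab₁ : a₁ ≤ b₁) (hab₂ : a₂ ≤ b₂) {w₁ w₂ : ℝ → EuclideanSpace ℝ (Fin n)}
    (hw₁ : ContinuousOn w₁ (Icc a₁ b₁)) (hinj₁ : InjOn w₁ (Icc a₁ b₁))
    (hw₂ : ContinuousOn w₂ (Icc a₂ b₂)) (hinj₂ : InjOn w₂ (Icc a₂ b₂))
    (himage : w₁ '' Icc a₁ b₁ = w₂ '' Icc a₂ b₂)
    (hstart : w₁ a₁ = w₂ a₂) (hend : w₁ b₁ = w₂ b₂) :
    massFn α w₁ a₁ b₁ ≤ massFn α w₂ a₂ b₂ := by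
  set φ : ℝ → ℝ := invFunOn w₁ (Icc a₁ b₁) ∘ w₂
  have hsurj : SurjOn w₁ (Icc a₁ b₁) (w₂ '' Icc a₂ b₂) := himage ▸ surjOn_image w₁ _
  have hw₂_maps : MapsTo w₂ (Icc a₂ b₂) (w₁ '' Icc a₁ b₁) := himage ▸ mapsTo_image w₂ _
  have hcomp : EqOn (w₁ ∘ φ) w₂ (Icc a₂ b₂) := fun t ht =>
    hsurj.rightInvOn_invFunOn (mem_image_of_mem w₂ ht)
  have hφa : φ a₂ = a₁ := by
    simp only [φ, comp_apply, ← hstart]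
    exact hinj₁.leftInvOn_invFunOn (left_mem_Icc.mpr hab₁)
  have hφb : φ b₂ = b₁ := by
    simp only [φ, comp_apply, ← hend]
    exact hinj₁.leftInvOn_invFunOn (right_mem_Icc.mpr hab₁)
  have hφc : ContinuousOn φ (Icc a₂ b₂) :=
    (hinj₁.continuousOn_invFunOn isCompact_Icc hw₁).comp hw₂ hw₂_maps
  have hφinj : InjOn φ (Icc a₂ b₂) := fun s hs t ht hst =>
    hinj₂ hs ht ((hcomp hs).symm.trans ((congrArg w₁ hst).trans (hcomp ht)))
  have hφ : StrictMonoOn φ (Icc a₂ b₂) :=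
    hφc.strictMonoOn_of_injOn_Icc hab₂ (by rwa [hφa, hφb]) hφinj
  exact massFn_le_of_strictMonoOn α hφ hφc hφa hφb hcomp

theorem massFn_reparam_general {n : ℕ} {a₁ b₁ a₂ b₂ : ℝ}
    (hab₁ : a₁ ≤ b₁) (hab₂ : a₂ ≤ b₂)
    (w₁ w₂ : ℝ → EuclideanSpace ℝ (Fin n))
    (hw₁ : ContinuousOn w₁ (Icc a₁ b₁)) (hinj₁ : InjOn w₁ (Icc a₁ b₁))
    (hw₂ : ContinuousOn w₂ (Icc a₂ b₂)) (hinj₂ : InjOn w₂ (Icc a₂ b₂))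
    (himage : w₁ '' Icc a₁ b₁ = w₂ '' Icc a₂ b₂)
    (hstart : w₁ a₁ = w₂ a₂) (hend : w₁ b₁ = w₂ b₂)
    {α : ℝ} :
    massFn α w₁ a₁ b₁ = massFn α w₂ a₂ b₂ :=
  le_antisymm
    (massFn_le_of_image_eq α hab₁ hab₂ hw₁ hinj₁ hw₂ hinj₂ himage hstart hend)
    (massFn_le_of_image_eq α hab₂ hab₁ hw₂ hinj₂ hw₁ hinj₁ himage.symm hstart.symm hend.symm)

/-- the mass function is independent of the (same-oriented,
continuous, injective) parametrization:
γ^α(F,a₁,b₁;w₁) = γ^α(F,a₂,b₂;w₂). -/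
theorem massFn_reparam {n : ℕ} (hn : 1 ≤ n) {a₁ b₁ a₂ b₂ : ℝ}
    (hab₁ : a₁ ≤ b₁) (hab₂ : a₂ ≤ b₂)
    (w₁ w₂ : ℝ → EuclideanSpace ℝ (Fin n))
    (hw₁ : ContinuousOn w₁ (Icc a₁ b₁)) (hinj₁ : InjOn w₁ (Icc a₁ b₁))
    (hw₂ : ContinuousOn w₂ (Icc a₂ b₂)) (hinj₂ : InjOn w₂ (Icc a₂ b₂))
    (himage : w₁ '' Icc a₁ b₁ = w₂ '' Icc a₂ b₂)
    (hstart : w₁ a₁ = w₂ a₂) (hend : w₁ b₁ = w₂ b₂)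
    {α : ℝ} (hα : α ∈ Icc (1 : ℝ) (n : ℝ)) :
    massFn α w₁ a₁ b₁ = massFn α w₂ a₂ b₂ :=
  massFn_reparam_general hab₁ hab₂ w₁ w₂ hw₁ hinj₁ hw₂ hinj₂ himage hstart hend
end

section
/- Conjugacy of derivatives (forward direction): let h : F → ℝ be bounded and suppose g = φ[h] is differentiable on K = [S_F^α(a₀), S_F^α(b₀)]. Then the F^α-derivative (D_F^α h)(θ) exists for all θ ∈ F and (D_F^α h)(θ) = g'(J(θ)). -/
/-! The F^α-difference quotient of `h` at `θ = w t`, taken at `θ' = w t'`, is the slope of `g`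
between `S t` and `S t'` (`S = SF α w a₀`), because `h ∘ w = g ∘ S` and `J ∘ w = S`. As
`θ' → θ` in `F` we get `t' → t`, since `w` is a homeomorphism of the compact interval onto `F`;
then `S t' → S t` with `S t' ≠ S t`, and the quotient tends to `g' (S t)`.

The substance is the continuity of the staircase function `S`. The mass `γ^α` is additive over
adjacent intervals: inserting a point into a subdivision of mesh `δ` raises its sum by at most
`2 η^α / Γ(α+1)`, where `η` is the modulus of continuity of `w` at scale `δ`. Additivity and the
finiteness of the total mass then force the mass of short intervals to be uniformly small. -/

open Set
open scoped ENNReal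

/-- The staircase (rise) function S_F^α(t) = γ^α(F,a₀,t). -/
noncomputable def SF {n : ℕ} (α : ℝ) (w : ℝ → EuclideanSpace ℝ (Fin n))
    (a₀ : ℝ) (t : ℝ) : ℝ :=
  (massFn α w a₀ t).toReal

/-- `l` is the F-limit of `f` as θ' → θ through points of `F`. -/
def IsFLimit {n : ℕ} (F : Set (EuclideanSpace ℝ (Fin n)))
    (f : EuclideanSpace ℝ (Fin n) → ℝ) (θ : EuclideanSpace ℝ (Fin n)) (l : ℝ) : Prop :=
  ∀ ε > (0 : ℝ), ∃ δ > (0 : ℝ), ∀ θ' ∈ F, θ' ≠ θ → ‖θ' - θ‖ < δ → |f θ' - l| < ε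

/-- `f` is F-continuous at θ. -/
def FContinuousAt {n : ℕ} (F : Set (EuclideanSpace ℝ (Fin n)))
    (f : EuclideanSpace ℝ (Fin n) → ℝ) (θ : EuclideanSpace ℝ (Fin n)) : Prop :=
  IsFLimit F f θ (f θ)

/-- The F^α-derivative of `f` at θ is `l`:
l = F-lim_{θ'→θ} (f(θ') − f(θ))/(J(θ') − J(θ)). -/
def HasFAlphaDerivAt {n : ℕ} (F : Set (EuclideanSpace ℝ (Fin n)))
    (J : EuclideanSpace ℝ (Fin n) → ℝ) (f : EuclideanSpace ℝ (Fin n) → ℝ)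
    (θ : EuclideanSpace ℝ (Fin n)) (l : ℝ) : Prop :=
  IsFLimit F (fun θ' => (f θ' - f θ) / (J θ' - J θ)) θ l

/-- Upper F^α-sum U^α[f,F,P] of `f` over the subdivision `P`. -/
noncomputable def upperFSum {n : ℕ} (α : ℝ) (w : ℝ → EuclideanSpace ℝ (Fin n))
    (a₀ : ℝ) (f : EuclideanSpace ℝ (Fin n) → ℝ) {a b : ℝ} (P : Subdivision a b) : ℝ :=
  ∑ i ∈ Finset.range P.k,
    sSup (f '' (w '' Icc (P.t i) (P.t (i + 1)))) *
      (SF α w a₀ (P.t (i + 1)) - SF α w a₀ (P.t i))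

/-- Lower F^α-sum L^α[f,F,P] of `f` over the subdivision `P`. -/
noncomputable def lowerFSum {n : ℕ} (α : ℝ) (w : ℝ → EuclideanSpace ℝ (Fin n))
    (a₀ : ℝ) (f : EuclideanSpace ℝ (Fin n) → ℝ) {a b : ℝ} (P : Subdivision a b) : ℝ :=
  ∑ i ∈ Finset.range P.k,
    sInf (f '' (w '' Icc (P.t i) (P.t (i + 1)))) *
      (SF α w a₀ (P.t (i + 1)) - SF α w a₀ (P.t i))

/-- `f` is F^α-integrable on C(a,b) with integral `v`:
inf of upper sums = sup of lower sums = v. -/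
def HasFIntegral {n : ℕ} (α : ℝ) (w : ℝ → EuclideanSpace ℝ (Fin n)) (a₀ : ℝ)
    (f : EuclideanSpace ℝ (Fin n) → ℝ) (a b : ℝ) (v : ℝ) : Prop :=
  sInf (Set.range fun P : Subdivision a b => upperFSum α w a₀ f P) = v ∧
  sSup (Set.range fun P : Subdivision a b => lowerFSum α w a₀ f P) = v

namespace Subdivision

variable {a b c : ℝ}

def refl (a : ℝ) : Subdivision a a :=
  ⟨0, fun _ => a, rfl, rfl, fun _ hi => absurd hi (Nat.not_lt_zero _)⟩

def single (h : a < b) : Subdivision a b :=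
  ⟨1, fun i => if i = 0 then a else b, rfl, rfl, fun i hi => by simp [Nat.lt_one_iff.mp hi, h]⟩

def take (R : Subdivision a c) (j : ℕ) (hj : j ≤ R.k) : Subdivision a (R.t j) :=
  ⟨j, R.t, R.first, rfl, fun i hi => R.mono i (by omega)⟩

def drop (R : Subdivision a c) (j : ℕ) (hj : j ≤ R.k) : Subdivision (R.t j) c :=
  ⟨R.k - j, fun i => R.t (j + i), rfl, by rw [Nat.add_sub_cancel' hj, R.last],
    fun i hi => R.mono (j + i) (by omega)⟩

theorem ite_t_eq_of_k_le (P : Subdivision a b) (Q : Subdivision b c) {i : ℕ} (hi : P.k ≤ i) :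
    (if i ≤ P.k then P.t i else Q.t (i - P.k)) = Q.t (i - P.k) := by
  split_ifs with h
  · rw [le_antisymm h hi, Nat.sub_self, P.last, Q.first]
  · rfl

def concat (P : Subdivision a b) (Q : Subdivision b c) : Subdivision a c where
  k := P.k + Q.k
  t i := if i ≤ P.k then P.t i else Q.t (i - P.k)
  first := by simp [P.first]
  last := by rw [ite_t_eq_of_k_le P Q (by omega), Nat.add_sub_cancel_left, Q.last]
  mono i hi := by
    rcases lt_or_ge i P.k with h | h
    · rw [if_pos h.le, if_pos (show i + 1 ≤ P.k from h)]
      exact P.mono i h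
    · rw [ite_t_eq_of_k_le P Q h, ite_t_eq_of_k_le P Q (by omega), Nat.sub_add_comm h]
      exact Q.mono _ (by omega)

theorem concat_t_of_le_k (P : Subdivision a b) (Q : Subdivision b c) {i : ℕ} (hi : i ≤ P.k) :
    (P.concat Q).t i = P.t i :=
  if_pos hi

theorem concat_t_of_k_le (P : Subdivision a b) (Q : Subdivision b c) {i : ℕ} (hi : P.k ≤ i) :
    (P.concat Q).t i = Q.t (i - P.k) :=
  ite_t_eq_of_k_le P Q hi

theorem strictMonoOn_t (R : Subdivision a c) : StrictMonoOn R.t (Iic R.k) :=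
  strictMonoOn_Iic_of_lt_succ fun m hm => by simpa using R.mono m hm

theorem t_mem (R : Subdivision a c) {i : ℕ} (hi : i ≤ R.k) : R.t i ∈ Icc a c := by
  have hmono := R.strictMonoOn_t.monotoneOn
  constructor
  · simpa [R.first] using hmono (Nat.zero_le R.k) hi (Nat.zero_le i)
  · simpa [R.last] using hmono hi (le_refl R.k) hi

theorem exists_t_le_le (R : Subdivision a c) (hk : 0 < R.k) (hb : b ∈ Icc a c) :
    ∃ j < R.k, R.t j ≤ b ∧ b ≤ R.t (j + 1) := by
  have hbk : b ≤ R.t R.k := by rw [R.last]; exact hb.2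
  have hex : ∃ m, b ≤ R.t m := ⟨R.k, hbk⟩
  obtain hm | hm := Nat.eq_zero_or_pos (Nat.find hex)
  · refine ⟨0, hk, by rw [R.first]; exact hb.1, ?_⟩
    have hba : b ≤ R.t 0 := hm ▸ Nat.find_spec hex
    exact hba.trans (R.mono 0 hk).le
  · refine ⟨Nat.find hex - 1, ?_, ?_, ?_⟩
    · have := Nat.find_min' hex hbk
      omega
    · exact (not_le.mp (Nat.find_min hex (by omega))).le
    · rw [Nat.sub_add_cancel hm]
      exact Nat.find_spec hex

theorem MeshLE.concat {δ : ℝ} {P : Subdivision a b} {Q : Subdivision b c} (hP : P.MeshLE δ)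
    (hQ : Q.MeshLE δ) : (P.concat Q).MeshLE δ := by
  intro i hi
  rcases lt_or_ge i P.k with h | h
  · rw [concat_t_of_le_k P Q h, concat_t_of_le_k P Q h.le]
    exact hP i h
  · rw [concat_t_of_k_le P Q (by omega), concat_t_of_k_le P Q h, Nat.sub_add_comm h]
    exact hQ _ (by change i < P.k + Q.k at hi; omega)

theorem MeshLE.take {δ : ℝ} {R : Subdivision a c} (hR : R.MeshLE δ) (j : ℕ) (hj : j ≤ R.k) :
    (R.take j hj).MeshLE δ :=
  fun i hi => hR i (by simp only [Subdivision.take] at hi; omega)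

theorem MeshLE.drop {δ : ℝ} {R : Subdivision a c} (hR : R.MeshLE δ) (j : ℕ) (hj : j ≤ R.k) :
    (R.drop j hj).MeshLE δ :=
  fun i hi => hR (j + i) (by simp only [Subdivision.drop] at hi; omega)

theorem MeshLE.single {δ : ℝ} (h : a < b) (hδ : b - a ≤ δ) : (single h).MeshLE δ := by
  intro i hi
  simpa [Nat.lt_one_iff.mp hi, Subdivision.single] using hδ

end Subdivision

section Sums

variable {n : ℕ} {α : ℝ} {w : ℝ → EuclideanSpace ℝ (Fin n)} {a b c δ : ℝ}

open Subdivision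

theorem sigmaSum_nonneg (hα : -1 < α) (P : Subdivision a b) : 0 ≤ sigmaSum α w P :=
  div_nonneg (Finset.sum_nonneg fun _ _ => by positivity)
    (Real.Gamma_pos_of_pos (by linarith)).le

theorem sigmaSum_concat (P : Subdivision a b) (Q : Subdivision b c) :
    sigmaSum α w (P.concat Q) = sigmaSum α w P + sigmaSum α w Q := by
  rw [sigmaSum, sigmaSum, sigmaSum, ← add_div]
  congr 1
  refine (Finset.sum_range_add _ P.k Q.k).trans (congrArg₂ _ ?_ ?_)
  · refine Finset.sum_congr rfl fun i hi => ?_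
    have hi : i < P.k := Finset.mem_range.mp hi
    rw [concat_t_of_le_k P Q hi, concat_t_of_le_k P Q hi.le]
  · refine Finset.sum_congr rfl fun i _ => ?_
    rw [concat_t_of_k_le P Q (by omega), concat_t_of_k_le P Q (by omega), add_assoc,
      Nat.add_sub_cancel_left, Nat.add_sub_cancel_left]

theorem sigmaSum_take_add_drop (R : Subdivision a c) (j : ℕ) (hj : j ≤ R.k) :
    sigmaSum α w (R.take j hj) + sigmaSum α w (R.drop j hj) = sigmaSum α w R := by
  rw [sigmaSum, sigmaSum, sigmaSum, ← add_div]
  congr 1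
  conv_rhs => rw [← Nat.add_sub_cancel' hj, Finset.sum_range_add]
  rfl

theorem sigmaSum_take_succ (R : Subdivision a c) {j : ℕ} (hj : j < R.k) :
    sigmaSum α w (R.take (j + 1) hj) =
      sigmaSum α w (R.take j hj.le) + ‖w (R.t (j + 1)) - w (R.t j)‖ ^ α / Real.Gamma (α + 1) := by
  simp only [sigmaSum, Subdivision.take, Finset.sum_range_succ, add_div]

theorem exists_meshLE_sigmaSum_le (hα : -1 < α) (hab : a ≤ b) (hδ : b - a ≤ δ) :
    ∃ P : Subdivision a b, P.MeshLE δ ∧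
      sigmaSum α w P ≤ ‖w b - w a‖ ^ α / Real.Gamma (α + 1) := by
  rcases hab.eq_or_lt with rfl | hab
  · refine ⟨Subdivision.refl a, fun i hi => absurd hi (Nat.not_lt_zero _), ?_⟩
    have hΓ : 0 < Real.Gamma (α + 1) := Real.Gamma_pos_of_pos (by linarith)
    simpa [sigmaSum, Subdivision.refl] using div_nonneg (Real.rpow_nonneg le_rfl α) hΓ.le
  · exact ⟨single hab, .single hab hδ, by simp [sigmaSum, Subdivision.single]⟩

theorem Subdivision.exists_split_sigmaSum_le (hα : 0 ≤ α) {e : ℝ} (he : 0 ≤ e)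
    (hmod : ∀ s ∈ Icc a c, ∀ s' ∈ Icc a c, s ≤ s' → s' - s ≤ δ → ‖w s' - w s‖ ^ α ≤ e)
    (R : Subdivision a c) (hR : R.MeshLE δ) (hb : b ∈ Icc a c) :
    ∃ (P : Subdivision a b) (Q : Subdivision b c), P.MeshLE δ ∧ Q.MeshLE δ ∧
      sigmaSum α w P + sigmaSum α w Q ≤ sigmaSum α w R + 2 * e / Real.Gamma (α + 1) := by
  have hΓ : 0 < Real.Gamma (α + 1) := Real.Gamma_pos_of_pos (by linarith)
  rcases R.k.eq_zero_or_pos with hk | hk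
  · obtain rfl : a = c := by simpa [R.first, hk] using R.last
    obtain rfl : b = a := le_antisymm hb.2 hb.1
    refine ⟨R, R, hR, hR, ?_⟩
    have hR0 : sigmaSum α w R = 0 := by simp [sigmaSum, hk]
    rw [hR0, add_zero, zero_add]
    positivity
  obtain ⟨j, hj, hjb, hbj⟩ := R.exists_t_le_le hk hb
  have hmesh := hR j hj
  obtain ⟨P, hP, hσP⟩ := exists_meshLE_sigmaSum_le (α := α) (w := w) (by linarith) hjb
    (show b - R.t j ≤ δ by linarith)
  obtain ⟨Q, hQ, hσQ⟩ := exists_meshLE_sigmaSum_le (α := α) (w := w) (by linarith) hbj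
    (show R.t (j + 1) - b ≤ δ by linarith)
  refine ⟨(R.take j hj.le).concat P, Q.concat (R.drop (j + 1) hj),
    (hR.take _ _).concat hP, hQ.concat (hR.drop _ _), ?_⟩
  have hleft := hmod _ (R.t_mem hj.le) b hb hjb (by linarith)
  have hright := hmod b hb _ (R.t_mem hj) hbj (by linarith)
  have hnew : ‖w b - w (R.t j)‖ ^ α / Real.Gamma (α + 1) +
      ‖w (R.t (j + 1)) - w b‖ ^ α / Real.Gamma (α + 1) ≤ 2 * e / Real.Gamma (α + 1) := by
    rw [← add_div]
    gcongr
    linarith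
  have hold : 0 ≤ ‖w (R.t (j + 1)) - w (R.t j)‖ ^ α / Real.Gamma (α + 1) := by positivity
  rw [sigmaSum_concat, sigmaSum_concat, ← sigmaSum_take_add_drop R (j + 1) hj,
    sigmaSum_take_succ R hj]
  linarith

end Sums

section Mass

variable {n : ℕ} {α : ℝ} {w : ℝ → EuclideanSpace ℝ (Fin n)} {a b c δ : ℝ}

theorem gammaDelta_le (P : Subdivision a b) (hP : P.MeshLE δ) :
    gammaDelta α w a b δ ≤ ENNReal.ofReal (sigmaSum α w P) :=
  iInf₂_le P hP

theorem gammaDelta_antitone : Antitone (gammaDelta α w a b) :=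
  fun _ _ h => le_iInf₂ fun P hP => iInf₂_le P fun i hi => (hP i hi).trans h

theorem gammaDelta_le_massFn (hδ : 0 < δ) : gammaDelta α w a b δ ≤ massFn α w a b :=
  le_iSup₂ (f := fun δ (_ : 0 < δ) => gammaDelta α w a b δ) δ hδ

theorem gammaDelta_le_add (hα : -1 < α) :
    gammaDelta α w a c δ ≤ gammaDelta α w a b δ + gammaDelta α w b c δ :=
  ENNReal.le_iInf₂_add_iInf₂ fun P hP Q hQ => (gammaDelta_le _ (hP.concat hQ)).trans_eq <| by
    rw [sigmaSum_concat, ENNReal.ofReal_add (sigmaSum_nonneg hα P) (sigmaSum_nonneg hα Q)]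

theorem massFn_le_add (hα : -1 < α) : massFn α w a c ≤ massFn α w a b + massFn α w b c :=
  iSup₂_le fun _ hδ => (gammaDelta_le_add hα).trans
    (add_le_add (gammaDelta_le_massFn hδ) (gammaDelta_le_massFn hδ))

theorem gammaDelta_le_ofReal_rpow_norm_sub (hα : -1 < α) (hab : a ≤ b) (hδ : b - a ≤ δ) :
    gammaDelta α w a b δ ≤ ENNReal.ofReal (‖w b - w a‖ ^ α / Real.Gamma (α + 1)) :=
  let ⟨P, hP, hσ⟩ := exists_meshLE_sigmaSum_le (w := w) hα hab hδ
  (gammaDelta_le P hP).trans (ENNReal.ofReal_le_ofReal hσ)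

theorem gammaDelta_add_gammaDelta_le (hα : 0 ≤ α) {e : ℝ} (he : 0 ≤ e)
    (hmod : ∀ s ∈ Icc a c, ∀ s' ∈ Icc a c, s ≤ s' → s' - s ≤ δ → ‖w s' - w s‖ ^ α ≤ e)
    (hb : b ∈ Icc a c) :
    gammaDelta α w a b δ + gammaDelta α w b c δ ≤
      gammaDelta α w a c δ + ENNReal.ofReal (2 * e / Real.Gamma (α + 1)) := by
  have hα' : -1 < α := by linarith
  conv_rhs => rw [gammaDelta, ENNReal.iInf₂_add]
  refine le_iInf₂ fun R hR => ?_
  obtain ⟨P, Q, hP, hQ, hσ⟩ := R.exists_split_sigmaSum_le hα he hmod hR hb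
  calc gammaDelta α w a b δ + gammaDelta α w b c δ
      ≤ ENNReal.ofReal (sigmaSum α w P) + ENNReal.ofReal (sigmaSum α w Q) :=
        add_le_add (gammaDelta_le P hP) (gammaDelta_le Q hQ)
    _ = ENNReal.ofReal (sigmaSum α w P + sigmaSum α w Q) :=
        (ENNReal.ofReal_add (sigmaSum_nonneg hα' P) (sigmaSum_nonneg hα' Q)).symm
    _ ≤ ENNReal.ofReal (sigmaSum α w R + 2 * e / Real.Gamma (α + 1)) :=
        ENNReal.ofReal_le_ofReal hσ
    _ = ENNReal.ofReal (sigmaSum α w R) + ENNReal.ofReal (2 * e / Real.Gamma (α + 1)) :=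
        ENNReal.ofReal_add (sigmaSum_nonneg hα' R)
          (div_nonneg (by positivity) (Real.Gamma_pos_of_pos (by linarith)).le)

theorem exists_rpow_norm_sub_le (hα : 0 < α) (hw : ContinuousOn w (Icc a c)) {e : ℝ}
    (he : 0 < e) :
    ∃ δ > 0, ∀ s ∈ Icc a c, ∀ s' ∈ Icc a c, s ≤ s' → s' - s ≤ δ → ‖w s' - w s‖ ^ α ≤ e := by
  obtain ⟨ρ, hρ, hρe⟩ : ∃ ρ > 0, ρ ^ α ≤ e :=
    ⟨e ^ α⁻¹, by positivity, (Real.rpow_inv_rpow he.le hα.ne').le⟩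
  obtain ⟨δ, hδ, hδρ⟩ := Metric.uniformContinuousOn_iff.mp
    (isCompact_Icc.uniformContinuousOn_of_continuous hw) ρ hρ
  refine ⟨δ / 2, by positivity, fun s hs s' hs' hss' hs's => ?_⟩
  have hclose : ‖w s' - w s‖ < ρ := by
    rw [← dist_eq_norm]
    exact hδρ s' hs' s hs (by rw [Real.dist_eq, abs_of_nonneg (by linarith)]; linarith)
  exact (Real.rpow_le_rpow (norm_nonneg _) hclose.le hα.le).trans hρe

theorem massFn_add_massFn_le (hα : 0 < α) (hw : ContinuousOn w (Icc a c)) (hb : b ∈ Icc a c) :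
    massFn α w a b + massFn α w b c ≤ massFn α w a c := by
  have hΓ : 0 < Real.Gamma (α + 1) := Real.Gamma_pos_of_pos (by linarith)
  refine ENNReal.le_of_forall_pos_le_add fun ε hε _ => ?_
  obtain ⟨δ₀, hδ₀, hmod⟩ := exists_rpow_norm_sub_le hα hw (e := ε * Real.Gamma (α + 1) / 2)
    (by positivity)
  refine ENNReal.biSup_add_biSup_le' ⟨1, one_pos⟩ ⟨1, one_pos⟩ fun δ₁ hδ₁ δ₂ hδ₂ => ?_
  have hδ : 0 < min δ₀ (min δ₁ δ₂) := lt_min hδ₀ (lt_min hδ₁ hδ₂)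
  have herr : 2 * (ε * Real.Gamma (α + 1) / 2) / Real.Gamma (α + 1) = ε := by
    field_simp
  calc gammaDelta α w a b δ₁ + gammaDelta α w b c δ₂
      ≤ gammaDelta α w a b (min δ₀ (min δ₁ δ₂)) + gammaDelta α w b c (min δ₀ (min δ₁ δ₂)) :=
        add_le_add (gammaDelta_antitone ((min_le_right _ _).trans (min_le_left _ _)))
          (gammaDelta_antitone ((min_le_right _ _).trans (min_le_right _ _)))
    _ ≤ gammaDelta α w a c (min δ₀ (min δ₁ δ₂)) + ε := by
        refine (gammaDelta_add_gammaDelta_le hα.le (by positivity)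
          (fun s hs s' hs' h h' => hmod s hs s' hs' h (h'.trans (min_le_left _ _))) hb).trans ?_
        rw [herr, ENNReal.ofReal_coe_nnreal]
    _ ≤ massFn α w a c + ε := add_le_add (gammaDelta_le_massFn hδ) le_rfl

theorem massFn_add_massFn (hα : 0 < α) (hw : ContinuousOn w (Icc a c)) (hb : b ∈ Icc a c) :
    massFn α w a b + massFn α w b c = massFn α w a c :=
  le_antisymm (massFn_add_massFn_le hα hw hb) (massFn_le_add (by linarith))

end Mass

section Staircase

variable {n : ℕ} {α : ℝ} {w : ℝ → EuclideanSpace ℝ (Fin n)} {a b c u v δ : ℝ}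

theorem massFn_add_gammaDelta_le (hα : 0 < α) (hw : ContinuousOn w (Icc a c)) (hu : a ≤ u)
    (huv : u ≤ v) (hv : v ≤ c) (hδ : 0 < δ) (hvu : v - u ≤ δ) :
    massFn α w u v + gammaDelta α w a c δ ≤
      massFn α w a c + ENNReal.ofReal (‖w v - w u‖ ^ α / Real.Gamma (α + 1)) := by
  have hα' : -1 < α := by linarith
  have hsplit : massFn α w a u + massFn α w u v + massFn α w v c = massFn α w a c := by
    rw [massFn_add_massFn hα (hw.mono (Icc_subset_Icc le_rfl hv)) ⟨hu, huv⟩,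
      massFn_add_massFn hα hw ⟨hu.trans huv, hv⟩]
  calc massFn α w u v + gammaDelta α w a c δ
      ≤ massFn α w u v + (gammaDelta α w a u δ + gammaDelta α w u v δ + gammaDelta α w v c δ) :=
        add_le_add le_rfl ((gammaDelta_le_add hα').trans
          (add_le_add (gammaDelta_le_add hα') le_rfl))
    _ ≤ massFn α w u v + (massFn α w a u +
          ENNReal.ofReal (‖w v - w u‖ ^ α / Real.Gamma (α + 1)) + massFn α w v c) := by
        gcongr
        · exact gammaDelta_le_massFn hδ
        · exact gammaDelta_le_ofReal_rpow_norm_sub hα' huv hvu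
        · exact gammaDelta_le_massFn hδ
    _ = massFn α w a c + ENNReal.ofReal (‖w v - w u‖ ^ α / Real.Gamma (α + 1)) := by
        rw [← hsplit]
        ring

theorem exists_massFn_lt_gammaDelta_add (hfin : massFn α w a b ≠ ⊤) {ε : ℝ≥0∞} (hε : ε ≠ 0) :
    ∃ δ > 0, massFn α w a b < gammaDelta α w a b δ + ε := by
  by_contra! H
  have hle : massFn α w a b + ε ≤ massFn α w a b := by
    rw [massFn, ENNReal.biSup_add' ⟨1, one_pos⟩]
    exact iSup₂_le H
  exact (ENNReal.lt_add_right hfin hε).not_ge hle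

theorem exists_massFn_le (hα : 0 < α) (hw : ContinuousOn w (Icc a c))
    (hfin : massFn α w a c ≠ ⊤) {ε : ℝ} (hε : 0 < ε) :
    ∃ δ > 0, ∀ u v, a ≤ u → u ≤ v → v ≤ c → v - u ≤ δ →
      massFn α w u v ≤ ENNReal.ofReal ε := by
  have hΓ : 0 < Real.Gamma (α + 1) := Real.Gamma_pos_of_pos (by linarith)
  obtain ⟨δ₁, hδ₁, hm⟩ := exists_massFn_lt_gammaDelta_add hfin
    (ENNReal.ofReal_pos.mpr (half_pos hε)).ne'
  obtain ⟨δ₂, hδ₂, hmod⟩ := exists_rpow_norm_sub_le hα hw (e := ε / 2 * Real.Gamma (α + 1))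
    (by positivity)
  refine ⟨min δ₁ δ₂, lt_min hδ₁ hδ₂, fun u v hu huv hv hvu => ?_⟩
  have hstep : ‖w v - w u‖ ^ α / Real.Gamma (α + 1) ≤ ε / 2 :=
    (div_le_iff₀ hΓ).mpr (hmod u ⟨hu, huv.trans hv⟩ v ⟨hu.trans huv, hv⟩ huv
      (hvu.trans (min_le_right _ _)))
  have hγ : gammaDelta α w a c δ₁ ≠ ⊤ := ne_top_of_le_ne_top hfin (gammaDelta_le_massFn hδ₁)
  have key : massFn α w u v + gammaDelta α w a c δ₁ ≤
      ENNReal.ofReal (ε / 2) + ENNReal.ofReal (ε / 2) + gammaDelta α w a c δ₁ :=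
    calc massFn α w u v + gammaDelta α w a c δ₁
        ≤ massFn α w a c + ENNReal.ofReal (‖w v - w u‖ ^ α / Real.Gamma (α + 1)) :=
          massFn_add_gammaDelta_le hα hw hu huv hv hδ₁ (hvu.trans (min_le_left _ _))
      _ ≤ gammaDelta α w a c δ₁ + ENNReal.ofReal (ε / 2) + ENNReal.ofReal (ε / 2) :=
          add_le_add hm.le (ENNReal.ofReal_le_ofReal hstep)
      _ = ENNReal.ofReal (ε / 2) + ENNReal.ofReal (ε / 2) + gammaDelta α w a c δ₁ := by ring
  rwa [ENNReal.add_le_add_iff_right hγ, ← ENNReal.ofReal_add (by positivity) (by positivity),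
    add_halves] at key

theorem SF_sub_SF (hα : 0 < α) (hw : ContinuousOn w (Icc a v)) (hfin : massFn α w a v ≠ ⊤)
    (hu : a ≤ u) (huv : u ≤ v) : SF α w a v - SF α w a u = (massFn α w u v).toReal := by
  rw [← massFn_add_massFn hα hw ⟨hu, huv⟩] at hfin
  rw [SF, SF, ← massFn_add_massFn hα hw ⟨hu, huv⟩,
    ENNReal.toReal_add (ENNReal.add_ne_top.mp hfin).1 (ENNReal.add_ne_top.mp hfin).2]
  ring

theorem continuousOn_SF (hα : 0 < α) (hw : ContinuousOn w (Icc a b))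
    (hfin : massFn α w a b ≠ ⊤) : ContinuousOn (SF α w a) (Icc a b) := by
  rw [Metric.continuousOn_iff]
  intro t ht ε hε
  obtain ⟨δ, hδ, hsmall⟩ := exists_massFn_le hα hw hfin (half_pos hε)
  have key : ∀ u ∈ Icc a b, ∀ v ∈ Icc a b, u ≤ v → v - u < δ →
      |SF α w a v - SF α w a u| < ε := by
    intro u hu v hv huv hvu
    have hfinv : massFn α w a v ≠ ⊤ := ne_top_of_le_ne_top hfin
      (le_self_add.trans_eq (massFn_add_massFn hα hw hv))
    rw [SF_sub_SF hα (hw.mono (Icc_subset_Icc le_rfl hv.2)) hfinv hu.1 huv,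
      abs_of_nonneg ENNReal.toReal_nonneg]
    exact (ENNReal.toReal_le_of_le_ofReal (by positivity)
      (hsmall u v hu.1 huv hv.2 hvu.le)).trans_lt (half_lt_self hε)
  refine ⟨δ, hδ, fun t' ht' hdist => ?_⟩
  rw [Real.dist_eq] at hdist ⊢
  rcases le_total t t' with h | h
  · exact key t ht t' ht' h ((le_abs_self _).trans_lt hdist)
  · rw [abs_sub_comm]
    exact key t' ht' t ht h ((le_abs_self _).trans_lt (abs_sub_comm t' t ▸ hdist))

end Staircase

open Filter Topology

theorem isFLimit_iff_tendsto {n : ℕ} {F : Set (EuclideanSpace ℝ (Fin n))}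
    {f : EuclideanSpace ℝ (Fin n) → ℝ} {θ : EuclideanSpace ℝ (Fin n)} {l : ℝ} :
    IsFLimit F f θ l ↔ Tendsto f (𝓝[F \ {θ}] θ) (𝓝 l) := by
  simp only [IsFLimit, Metric.tendsto_nhdsWithin_nhds, Set.mem_sdiff, mem_singleton_iff, and_imp,
    ← ne_eq, dist_eq_norm, Real.norm_eq_abs]

theorem tendsto_invFunOn_nhdsWithin_image {X Y : Type*} [TopologicalSpace X] [Nonempty X]
    [TopologicalSpace Y] [T2Space Y] {f : X → Y} {s : Set X} {x : X} (hs : IsCompact s)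
    (hf : ContinuousOn f s) (hinj : InjOn f s) (hx : x ∈ s) :
    Tendsto (Function.invFunOn f s) (𝓝[f '' s] (f x)) (𝓝 x) := by
  refine fun U hU => mem_map.mpr ?_
  have hfar : IsClosed (f '' (s \ interior U)) :=
    ((hs.diff isOpen_interior).image_of_continuousOn (hf.mono sdiff_subset)).isClosed
  have hx' : f x ∉ f '' (s \ interior U) := by
    rintro ⟨y, ⟨hy, hyU⟩, hyx⟩
    exact hyU (hinj hy hx hyx ▸ mem_interior_iff_mem_nhds.mpr hU)
  filter_upwards [inter_mem_nhdsWithin _ (hfar.isOpen_compl.mem_nhds hx')]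
  rintro _ ⟨⟨y, hy, rfl⟩, hyU⟩
  rw [mem_preimage, hinj.leftInvOn_invFunOn hy]
  by_contra hyU'
  exact hyU ⟨y, ⟨hy, fun h => hyU' (interior_subset h)⟩, rfl⟩

theorem tendsto_invFunOn_nhdsWithin_image_sdiff {X Y : Type*} [TopologicalSpace X] [Nonempty X]
    [TopologicalSpace Y] [T2Space Y] {f : X → Y} {s : Set X} {x : X} (hs : IsCompact s)
    (hf : ContinuousOn f s) (hinj : InjOn f s) (hx : x ∈ s) :
    Tendsto (Function.invFunOn f s) (𝓝[f '' s \ {f x}] (f x)) (𝓝[s \ {x}] x) := by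
  refine tendsto_nhdsWithin_of_tendsto_nhds_of_eventually_within _
    ((tendsto_invFunOn_nhdsWithin_image hs hf hinj hx).mono_left (nhdsWithin_mono _ sdiff_subset))
    (eventually_nhdsWithin_of_forall ?_)
  rintro _ ⟨⟨y, hy, rfl⟩, hyx⟩
  rw [hinj.leftInvOn_invFunOn hy]
  exact ⟨hy, fun h => hyx (congrArg f h)⟩

theorem conjugacy_of_derivatives_general {n : ℕ} {a₀ b₀ : ℝ}
    (w : ℝ → EuclideanSpace ℝ (Fin n))
    (hw : ContinuousOn w (Icc a₀ b₀)) (hinj : InjOn w (Icc a₀ b₀))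
    {α : ℝ} (hα : α ∈ Icc (1 : ℝ) (n : ℝ))
    (hfin : ∀ t ∈ Icc a₀ b₀, massFn α w a₀ t ≠ ⊤)
    (hS : StrictMonoOn (SF α w a₀) (Icc a₀ b₀))
    (J : EuclideanSpace ℝ (Fin n) → ℝ)
    (hJ : ∀ t ∈ Icc a₀ b₀, J (w t) = SF α w a₀ t)
    (h : EuclideanSpace ℝ (Fin n) → ℝ)
    (g g' : ℝ → ℝ) (hg : ∀ t ∈ Icc a₀ b₀, g (SF α w a₀ t) = h (w t))
    (hdiff : ∀ v ∈ Icc (SF α w a₀ a₀) (SF α w a₀ b₀),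
      HasDerivWithinAt g (g' v) (Icc (SF α w a₀ a₀) (SF α w a₀ b₀)) v) :
    ∀ θ ∈ w '' Icc a₀ b₀,
      HasFAlphaDerivAt (w '' Icc a₀ b₀) J h θ (g' (J θ)) := by
  rintro _ ⟨t, ht, rfl⟩
  have hab : a₀ ≤ b₀ := ht.1.trans ht.2
  have hSI : MapsTo (SF α w a₀) (Icc a₀ b₀) (Icc (SF α w a₀ a₀) (SF α w a₀ b₀)) :=
    fun s hs => ⟨hS.monotoneOn ⟨le_rfl, hab⟩ hs hs.1, hS.monotoneOn hs ⟨hab, le_rfl⟩ hs.2⟩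
  have hslope := hasDerivWithinAt_iff_tendsto_slope.mp (hdiff _ (hSI ht))
  have hSt : Tendsto (SF α w a₀) (𝓝[Icc a₀ b₀ \ {t}] t)
      (𝓝[Icc (SF α w a₀ a₀) (SF α w a₀ b₀) \ {SF α w a₀ t}] (SF α w a₀ t)) :=
    tendsto_nhdsWithin_of_tendsto_nhds_of_eventually_within _
      (((continuousOn_SF (by linarith [hα.1]) hw (hfin b₀ ⟨hab, le_rfl⟩)) t ht).tendsto.mono_left
        (nhdsWithin_mono _ sdiff_subset))
      (eventually_nhdsWithin_of_forall fun s hs => ⟨hSI hs.1, hS.injOn.ne hs.1 ht hs.2⟩)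
  have hinv := tendsto_invFunOn_nhdsWithin_image_sdiff isCompact_Icc hw hinj ht
  rw [HasFAlphaDerivAt, isFLimit_iff_tendsto, hJ t ht]
  refine (hslope.comp (hSt.comp hinv)).congr' (eventually_nhdsWithin_of_forall ?_)
  rintro _ ⟨⟨s, hs, rfl⟩, -⟩
  dsimp only [Function.comp_apply]
  rw [hinj.leftInvOn_invFunOn hs, slope_def_field, hJ s hs, ← hg s hs, ← hg t ht]

/-- conjugacy of derivatives, forward direction: if h is bounded
on F and g = φ[h] is differentiable on K = [S_F^α(a₀), S_F^α(b₀)], then the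
F^α-derivative of h exists at every θ ∈ F and equals g'(J(θ)). -/
theorem conjugacy_of_derivatives {n : ℕ} (hn : 1 ≤ n) {a₀ b₀ : ℝ}
    (w : ℝ → EuclideanSpace ℝ (Fin n))
    (hw : ContinuousOn w (Icc a₀ b₀)) (hinj : InjOn w (Icc a₀ b₀))
    {α : ℝ} (hα : α ∈ Icc (1 : ℝ) (n : ℝ))
    (hfin : ∀ t ∈ Icc a₀ b₀, massFn α w a₀ t ≠ ⊤)
    (hS : StrictMonoOn (SF α w a₀) (Icc a₀ b₀))
    (J : EuclideanSpace ℝ (Fin n) → ℝ)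
    (hJ : ∀ t ∈ Icc a₀ b₀, J (w t) = SF α w a₀ t)
    (h : EuclideanSpace ℝ (Fin n) → ℝ)
    (hbdd : ∃ M, ∀ θ ∈ w '' Icc a₀ b₀, |h θ| ≤ M)
    (g g' : ℝ → ℝ) (hg : ∀ t ∈ Icc a₀ b₀, g (SF α w a₀ t) = h (w t))
    (hdiff : ∀ v ∈ Icc (SF α w a₀ a₀) (SF α w a₀ b₀),
      HasDerivWithinAt g (g' v) (Icc (SF α w a₀ a₀) (SF α w a₀ b₀)) v) :
    ∀ θ ∈ w '' Icc a₀ b₀,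
      HasFAlphaDerivAt (w '' Icc a₀ b₀) J h θ (g' (J θ)) :=
  conjugacy_of_derivatives_general w hw hinj hα hfin hS J hJ h g g' hg hdiff
end
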